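/- Let μ be a probability measure on X supported on {x : ∃ i, c(x,u_i) < ∞}, non-degenerate with respect to (u_i)_{i=1}^m (each pairwise intersection of finiteness sets has positive measure). If I, J ⊆ [m] are nonempty and disjoint, then the faces F_I = {α ∈ P : Σ_{i∈I} α_i = μ(A_I)} and F_J of the Hall polytope P do not intersect. -/

import Mathlib

open MeasureTheory

/-- The set `A_I = {x : ∃ i ∈ I, c(x,u_i) < ∞}` (the target space is identified with `Fin m`). -/
def hallSet {X : Type*} {m : ℕ} (c : X → Fin m → EReal) (I : Finset (Fin m)) : Set X :=
  {x | ∃ i ∈ I, c x i ≠ ⊤}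

/-- The Hall polytope `P = {α ∈ Δ_m : ∀ I, Σ_{i∈I} α_i ≤ μ(A_I)}`. -/
def hallPolytope {X : Type*} [MeasurableSpace X] {m : ℕ} (c : X → Fin m → EReal)
    (μ : Measure X) : Set (Fin m → ℝ) :=
  {α | (∀ i, 0 ≤ α i) ∧ (∑ i, α i = 1) ∧
    ∀ I : Finset (Fin m), ∑ i ∈ I, α i ≤ (μ (hallSet c I)).toReal}

/-! If `α` lay on both faces, then `Σ_{I ∪ J} α = μ(A_I) + μ(A_J)`, while the Hall constraint for
`I ∪ J` bounds it by `μ(A_I ∪ A_J) = μ(A_I) + μ(A_J) - μ(A_I ∩ A_J)`. Non-degeneracy makes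
`A_I ∩ A_J ⊇ A_{i} ∩ A_{j}` (for `i ∈ I`, `j ∈ J`) a set of positive measure. -/

namespace MeasureTheory

theorem measureReal_union_lt_add {X : Type*} [MeasurableSpace X] {μ : Measure X}
    [IsFiniteMeasure μ] {s t : Set X} (ht : MeasurableSet t) (hst : 0 < μ (s ∩ t)) :
    μ.real (s ∪ t) < μ.real s + μ.real t := by
  have hpos : 0 < μ.real (s ∩ t) := ENNReal.toReal_pos hst.ne' (measure_ne_top μ _)
  linarith [measureReal_union_add_inter (μ := μ) (s := s) ht]

end MeasureTheory

section HallSet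

variable {X : Type*} {m : ℕ} (c : X → Fin m → EReal)

theorem hallSet_union (I J : Finset (Fin m)) :
    hallSet c (I ∪ J) = hallSet c I ∪ hallSet c J := by
  ext x
  simp only [hallSet, Finset.mem_union, Set.mem_ofPred_eq, Set.mem_union, or_and_right,
    exists_or]

theorem setOf_ne_top_subset_hallSet {i : Fin m} {I : Finset (Fin m)} (hi : i ∈ I) :
    {x | c x i ≠ ⊤} ⊆ hallSet c I :=
  fun _ hx => ⟨i, hi, hx⟩

theorem measurableSet_hallSet [MeasurableSpace X] (hA : ∀ i, MeasurableSet {x | c x i ≠ ⊤})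
    (I : Finset (Fin m)) : MeasurableSet (hallSet c I) := by
  have hI : hallSet c I = ⋃ i ∈ I, {x | c x i ≠ ⊤} := by
    ext x
    simp [hallSet]
  rw [hI]
  exact I.measurableSet_biUnion fun i _ => hA i

theorem measureReal_hallSet_add_le_of_mem_faces [MeasurableSpace X] {μ : Measure X}
    {α : Fin m → ℝ} (hα : α ∈ hallPolytope c μ) {I J : Finset (Fin m)} (hIJ : Disjoint I J)
    (hαI : ∑ i ∈ I, α i = μ.real (hallSet c I)) (hαJ : ∑ i ∈ J, α i = μ.real (hallSet c J)) :
    μ.real (hallSet c I) + μ.real (hallSet c J) ≤ μ.real (hallSet c (I ∪ J)) := by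
  rw [← hαI, ← hαJ, ← Finset.sum_union hIJ]
  exact hα.2.2 (I ∪ J)

end HallSet

theorem hallPolytope_disjoint_faces_general {X : Type*} [MeasurableSpace X] {m : ℕ}
    (c : X → Fin m → EReal)
    (hA : ∀ i : Fin m, MeasurableSet {x | c x i ≠ ⊤})
    (μ : Measure X) [IsProbabilityMeasure μ]
    (hnd : ∀ i j : Fin m, i ≠ j → 0 < μ ({x | c x i ≠ ⊤} ∩ {x | c x j ≠ ⊤}))
    (I J : Finset (Fin m)) (hI : I.Nonempty) (hJ : J.Nonempty) (hdisj : Disjoint I J) :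
    {α ∈ hallPolytope c μ | ∑ i ∈ I, α i = (μ (hallSet c I)).toReal} ∩
      {α ∈ hallPolytope c μ | ∑ i ∈ J, α i = (μ (hallSet c J)).toReal} = ∅ := by
  refine Set.eq_empty_of_forall_notMem ?_
  rintro α ⟨⟨hα, hαI⟩, -, hαJ⟩
  obtain ⟨i, hi⟩ := hI
  obtain ⟨j, hj⟩ := hJ
  have hij : i ≠ j := by rintro rfl; exact Finset.disjoint_left.mp hdisj hi hj
  have hoverlap : 0 < μ (hallSet c I ∩ hallSet c J) :=
    (hnd i j hij).trans_le <| measure_mono <| Set.inter_subset_inter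
      (setOf_ne_top_subset_hallSet c hi) (setOf_ne_top_subset_hallSet c hj)
  have hsuper := measureReal_hallSet_add_le_of_mem_faces c hα hdisj hαI hαJ
  rw [hallSet_union] at hsuper
  exact (measureReal_union_lt_add (measurableSet_hallSet c hA J) hoverlap).not_ge hsuper

/-- if `μ` is non-degenerate with respect to `(u_i)` and `I, J` are nonempty
and disjoint, then the faces `F_I` and `F_J` of the Hall polytope do not intersect. -/
theorem hallPolytope_disjoint_faces {X : Type*} [MeasurableSpace X] {m : ℕ}
    (c : X → Fin m → EReal) (hbot : ∀ x i, c x i ≠ ⊥)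
    (hA : ∀ i : Fin m, MeasurableSet {x | c x i ≠ ⊤})
    (μ : Measure X) [IsProbabilityMeasure μ]
    (hsupp : μ {x | ∀ i, c x i = ⊤} = 0)
    (hnd : ∀ i j : Fin m, i ≠ j → 0 < μ ({x | c x i ≠ ⊤} ∩ {x | c x j ≠ ⊤}))
    (I J : Finset (Fin m)) (hI : I.Nonempty) (hJ : J.Nonempty) (hdisj : Disjoint I J) :
    {α ∈ hallPolytope c μ | ∑ i ∈ I, α i = (μ (hallSet c I)).toReal} ∩
      {α ∈ hallPolytope c μ | ∑ i ∈ J, α i = (μ (hallSet c J)).toReal} = ∅ :=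
  hallPolytope_disjoint_faces_general c hA μ hnd I J hI hJ hdisj
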